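/- Let A be an m×n real matrix, b ∈ ℝ^m, Φ(x) = (1/2)‖Ax − b‖₂², and let L be a Lipschitz constant of ∇Φ. Let γ > 0 and β > 2L, suppose Aᵀb ≠ 0, and let (x^k, y^k, z^k) be an ADMM_p sequence with X = ℝ^n such that {x^k} is bounded, so that x^k converges to some x^∞ ≠ 0. Write Λ = supp(x^∞) = {i : x^∞ᵢ ≠ 0}, q^∞ = Aᵀ(Ax^∞ − b), a = ‖x^∞‖₁, r = ‖x^∞‖₂. Assume the nondegeneracy condition: γ·(sign(x^∞ᵢ)/r − (a/r³)·x^∞ᵢ) + q^∞ᵢ = 0 for every i ∈ Λ, and |q^∞ᵢ| < γ/r for every i ∉ Λ. Then there exists K such that supp(x^k) = Λ for all k ≥ K. -/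

import Mathlib

noncomputable section
open Classical

/-- The ℓ¹ norm on ℝ^n. -/
def l1 {n : ℕ} (x : EuclideanSpace ℝ (Fin n)) : ℝ := ∑ i, |x i|

/-- The ratio ‖x‖₁/‖x‖₂ with the convention that it equals 1 at the origin. -/
def ratio {n : ℕ} (x : EuclideanSpace ℝ (Fin n)) : ℝ :=
  if x = 0 then 1 else l1 x / ‖x‖

/-- `(x, y, z)` is an ADMM_p sequence for data `(β, γ, X, Φ)`:
at every step, `x^{k+1}` globally minimizes the proximal subproblem of the ratio `‖·‖₁/‖·‖₂`
over `X`, `y^{k+1}` globally minimizes the `Φ`-subproblem, and `z` is updated by the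
multiplier rule. -/
def ADMMpSeq {n : ℕ} (β γ : ℝ) (X : Set (EuclideanSpace ℝ (Fin n)))
    (Φ : EuclideanSpace ℝ (Fin n) → ℝ)
    (x y z : ℕ → EuclideanSpace ℝ (Fin n)) : Prop :=
  ∀ k : ℕ,
    (x (k + 1) ∈ X ∧ ∀ u ∈ X,
      ratio (x (k + 1)) + β / (2 * γ) * ‖x (k + 1) - (y k - β⁻¹ • z k)‖ ^ 2 ≤
        ratio u + β / (2 * γ) * ‖u - (y k - β⁻¹ • z k)‖ ^ 2) ∧
    (∀ u : EuclideanSpace ℝ (Fin n),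
      Φ (y (k + 1)) + β / 2 * ‖y (k + 1) - x (k + 1) - β⁻¹ • z k‖ ^ 2 ≤
        Φ u + β / 2 * ‖u - x (k + 1) - β⁻¹ • z k‖ ^ 2) ∧
    z (k + 1) = z k + β • (x (k + 1) - y (k + 1))


/-- Matrix–vector multiplication as a map between Euclidean spaces. -/
def mv {m n : ℕ} (A : Matrix (Fin m) (Fin n) ℝ) (x : EuclideanSpace ℝ (Fin n)) :
    EuclideanSpace ℝ (Fin m) :=
  (WithLp.equiv 2 (Fin m → ℝ)).symm (A.mulVec (WithLp.equiv 2 (Fin n → ℝ) x))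

/-!
The `y`-step makes `z^{k+1} = ∇Φ(y^{k+1})`, so the multiplier update reads
`β (y^{k+1} - x^{k+1}) = ∇Φ(y^k) - ∇Φ(y^{k+1})`. Since `β > 2L`, the residual `‖y^k - x^k‖`
therefore contracts up to the vanishing error `‖x^{k+1} - x^k‖`, whence `y^k → x^∞` and `z^k → q^∞`.

Coordinates in `Λ` stay nonzero by convergence. For `i ∉ Λ`, compare the minimizer `x^{k+1}` of the
proximal subproblem with the same vector with its `i`-th coordinate erased: if `x^{k+1}_i ≠ 0`, the
difference quotient of `‖·‖₁/‖·‖₂` along `e_i`, which tends to `1/‖x^∞‖`, is at most `(β/γ)|v^k_i|`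
with `v^k = y^k - z^k/β → x^∞ - q^∞/β`. In the limit this contradicts `|q^∞_i| < γ/‖x^∞‖`.
-/

open Filter Topology

lemma eq_zero_of_forall_mul_add_sq_nonneg {a M : ℝ} (h : ∀ t, 0 ≤ t * a + t ^ 2 * M) : a = 0 := by
  by_contra ha
  set s := a / (2 * (|M| + 1))
  have hs : 0 < s ^ 2 := by positivity
  have hsa : a = s * (2 * (|M| + 1)) := (div_mul_cancel₀ _ (by positivity)).symm
  have h1 := h (-s)
  rw [hsa] at h1
  nlinarith [mul_le_mul_of_nonneg_left (le_abs_self M) hs.le, mul_nonneg (abs_nonneg M) hs.le]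

lemma norm_add_smul_sq {E : Type*} [NormedAddCommGroup E] [InnerProductSpace ℝ E]
    (p h : E) (t : ℝ) : ‖p + t • h‖ ^ 2 = ‖p‖ ^ 2 + 2 * t * inner ℝ p h + t ^ 2 * ‖h‖ ^ 2 := by
  rw [norm_add_sq_real, inner_smul_right, norm_smul, mul_pow, Real.norm_eq_abs, sq_abs]
  ring

lemma mv_eq_toEuclideanLin {m n : ℕ} (A : Matrix (Fin m) (Fin n) ℝ) : mv A = Matrix.toEuclideanLin A :=
  rfl

lemma inner_mv_left {m n : ℕ} (A : Matrix (Fin m) (Fin n) ℝ) (x : EuclideanSpace ℝ (Fin n))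
    (w : EuclideanSpace ℝ (Fin m)) :
    inner ℝ (mv A x) w = inner ℝ x (mv A.transpose w) := by
  rw [mv_eq_toEuclideanLin, mv_eq_toEuclideanLin, ← Matrix.conjTranspose_eq_transpose_of_trivial,
    Matrix.toEuclideanLin_conjTranspose_eq_adjoint, LinearMap.adjoint_inner_right]

lemma mv_transpose_add_smul_eq_zero_of_isMin {m n : ℕ} (A : Matrix (Fin m) (Fin n) ℝ)
    (b : EuclideanSpace ℝ (Fin m)) (β : ℝ) (c y : EuclideanSpace ℝ (Fin n))
    (hmin : ∀ u, 1 / 2 * ‖mv A y - b‖ ^ 2 + β / 2 * ‖y - c‖ ^ 2 ≤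
      1 / 2 * ‖mv A u - b‖ ^ 2 + β / 2 * ‖u - c‖ ^ 2) :
    mv A.transpose (mv A y - b) + β • (y - c) = 0 := by
  set g := mv A.transpose (mv A y - b) + β • (y - c)
  have hg : inner ℝ (mv A y - b) (mv A g) + β * inner ℝ (y - c) g = ‖g‖ ^ 2 := by
    rw [real_inner_comm, inner_mv_left, real_inner_comm, ← real_inner_smul_left, ← inner_add_left,
      real_inner_self_eq_norm_sq]
  refine norm_eq_zero.1 (pow_eq_zero_iff two_ne_zero |>.1 <|
    eq_zero_of_forall_mul_add_sq_nonneg (M := 1 / 2 * ‖mv A g‖ ^ 2 + β / 2 * ‖g‖ ^ 2) fun t ↦ ?_)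
  have h := hmin (y + t • g)
  rw [mv_eq_toEuclideanLin, map_add, map_smul, ← mv_eq_toEuclideanLin,
    show mv A y + t • mv A g - b = (mv A y - b) + t • mv A g by abel,
    show y + t • g - c = (y - c) + t • g by abel, norm_add_smul_sq, norm_add_smul_sq] at h
  linear_combination h + t * hg

lemma tendsto_zero_of_le_mul_add {a t : ℕ → ℝ} {ρ : ℝ} (hρ0 : 0 ≤ ρ) (hρ1 : ρ < 1)
    (ha : ∀ k, 0 ≤ a k) (hrec : ∀ k, a (k + 1) ≤ ρ * a k + t k)
    (ht : Tendsto t atTop (𝓝 0)) : Tendsto a atTop (𝓝 0) := by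
  refine tendsto_order.2 ⟨fun ε hε ↦ .of_forall fun k ↦ hε.trans_le (ha k), fun ε hε ↦ ?_⟩
  obtain ⟨N, hN⟩ := eventually_atTop.1 <|
    ht.eventually (gt_mem_nhds (show 0 < (1 - ρ) * (ε / 2) by nlinarith))
  have hpow : ∀ j, a (N + j) - ε / 2 ≤ ρ ^ j * (a N - ε / 2) := by
    intro j
    induction j with
    | zero => simp
    | succ j ih =>
      have htN := hN (N + j) (by omega)
      calc a (N + (j + 1)) - ε / 2 ≤ ρ * (a (N + j) - ε / 2) := by
            rw [← add_assoc]; linarith [hrec (N + j)]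
        _ ≤ ρ ^ (j + 1) * (a N - ε / 2) := by
            rw [pow_succ', mul_assoc]; exact mul_le_mul_of_nonneg_left ih hρ0
  have hlim : Tendsto (fun j ↦ ρ ^ j * (a N - ε / 2)) atTop (𝓝 0) := by
    simpa using (tendsto_pow_atTop_nhds_zero_of_lt_one hρ0 hρ1).mul_const (a N - ε / 2)
  obtain ⟨J, hJ⟩ := eventually_atTop.1 (hlim.eventually (gt_mem_nhds (half_pos hε)))
  refine eventually_atTop.2 ⟨N + J, fun k hk ↦ ?_⟩
  obtain ⟨j, rfl⟩ := Nat.exists_eq_add_of_le (le_of_add_le_left hk)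
  linarith [hpow j, hJ j (by omega)]

theorem tendsto_of_lipschitz_multiplier_update {E : Type*} [NormedAddCommGroup E]
    [NormedSpace ℝ E] {G : E → E} {L β : ℝ} (hL0 : 0 ≤ L)
    (hG : ∀ a c, ‖G a - G c‖ ≤ L * ‖a - c‖) (hβ : 2 * L < β) {x y z : ℕ → E} {x' : E}
    (hz : ∀ k, z (k + 1) = G (y (k + 1)))
    (hupd : ∀ k, z (k + 1) = z k + β • (x (k + 1) - y (k + 1)))
    (hx : Tendsto x atTop (𝓝 x')) :
    Tendsto y atTop (𝓝 x') ∧ Tendsto z atTop (𝓝 (G x')) := by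
  have hβL : 0 < β - L := by linarith
  set e := fun k ↦ ‖y (k + 1) - x (k + 1)‖
  have hrec : ∀ k, e (k + 1) ≤ L / (β - L) * e k + L / (β - L) * ‖x (k + 2) - x (k + 1)‖ := by
    intro k
    have hβe : β * e (k + 1) ≤ L * ‖y (k + 2) - y (k + 1)‖ := by
      calc β * e (k + 1) = ‖G (y (k + 2)) - G (y (k + 1))‖ := by
            rw [← hz, ← hz, hupd (k + 1), add_sub_cancel_left, norm_smul,
              Real.norm_of_nonneg (by linarith), norm_sub_rev]
        _ ≤ L * ‖y (k + 2) - y (k + 1)‖ := hG _ _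
    have htri : ‖y (k + 2) - y (k + 1)‖ ≤ e (k + 1) + ‖x (k + 2) - x (k + 1)‖ + e k := by
      calc ‖y (k + 2) - y (k + 1)‖
          = ‖(y (k + 2) - x (k + 2)) + (x (k + 2) - x (k + 1)) - (y (k + 1) - x (k + 1))‖ := by
            congr 1; abel
        _ ≤ _ := norm_sub_le_of_le (norm_add_le _ _) le_rfl
    rw [← mul_add, div_mul_eq_mul_div, le_div_iff₀ hβL]
    nlinarith
  have he : Tendsto (fun k ↦ y k - x k) atTop (𝓝 0) := by
    refine (tendsto_add_atTop_iff_nat 1).1 (tendsto_zero_iff_norm_tendsto_zero.2 ?_)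
    refine tendsto_zero_of_le_mul_add (by positivity) ((div_lt_one hβL).2 (by linarith))
      (fun _ ↦ norm_nonneg _) hrec ?_
    have hdx := (hx.comp (tendsto_add_atTop_nat 2)).sub (hx.comp (tendsto_add_atTop_nat 1))
    simpa using hdx.norm.const_mul (L / (β - L))
  have hy : Tendsto y atTop (𝓝 x') := by simpa using he.add hx
  refine ⟨hy, ?_⟩
  have hGc : Continuous G := (LipschitzWith.of_dist_le_mul (K := ⟨L, hL0⟩) fun a c ↦ by
    rw [dist_eq_norm, dist_eq_norm]; exact hG a c).continuous
  refine (tendsto_add_atTop_iff_nat 1).1 ?_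
  simp only [hz]
  exact (hGc.tendsto x').comp (hy.comp (tendsto_add_atTop_nat 1))

@[fun_prop]
lemma continuous_l1 {n : ℕ} : Continuous (l1 (n := n)) := by
  unfold l1; fun_prop

section EraseCoord

variable {n : ℕ} (i : Fin n)

def eraseCoord (w : EuclideanSpace ℝ (Fin n)) : EuclideanSpace ℝ (Fin n) :=
  w - w i • EuclideanSpace.single i 1

lemma norm_sub_smul_single_sq (p : EuclideanSpace ℝ (Fin n)) (t : ℝ) :
    ‖p - t • EuclideanSpace.single i 1‖ ^ 2 = ‖p‖ ^ 2 - 2 * t * p i + t ^ 2 := by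
  rw [norm_sub_sq_real, real_inner_smul_right, EuclideanSpace.inner_single_right, norm_smul,
    PiLp.norm_single]
  simp only [conj_trivial, one_mul, norm_one, mul_one, Real.norm_eq_abs, sq_abs]
  ring

lemma norm_eraseCoord_sq (w : EuclideanSpace ℝ (Fin n)) :
    ‖eraseCoord i w‖ ^ 2 = ‖w‖ ^ 2 - w i ^ 2 := by
  rw [eraseCoord, norm_sub_smul_single_sq]; ring

lemma norm_eraseCoord_sub_sq (w v : EuclideanSpace ℝ (Fin n)) :
    ‖eraseCoord i w - v‖ ^ 2 = ‖w - v‖ ^ 2 - w i ^ 2 + 2 * w i * v i := by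
  rw [eraseCoord, sub_right_comm, norm_sub_smul_single_sq, PiLp.sub_apply]; ring

lemma l1_eraseCoord (w : EuclideanSpace ℝ (Fin n)) : l1 (eraseCoord i w) = l1 w - |w i| := by
  have h : ∀ j, |eraseCoord i w j| = |w j| - if i = j then |w i| else 0 := by
    intro j
    by_cases hj : i = j
    · subst hj; simp [eraseCoord]
    · simp [eraseCoord, hj, Ne.symm hj]
  simp only [l1, h, Finset.sum_sub_distrib, Finset.sum_ite_eq, Finset.mem_univ, if_true]

lemma eraseCoord_of_eq_zero {w : EuclideanSpace ℝ (Fin n)} (h : w i = 0) : eraseCoord i w = w := by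
  simp [eraseCoord, h]

lemma continuous_eraseCoord : Continuous (eraseCoord (n := n) i) := by
  unfold eraseCoord; fun_prop

end EraseCoord

section EraseSlope

variable {n : ℕ} (i : Fin n)

/-- `(ratio w - ratio (eraseCoord i w)) / |w i|`, in a form that stays continuous where `w i = 0`. -/
def eraseSlope (w : EuclideanSpace ℝ (Fin n)) : ℝ :=
  1 / ‖w‖ - l1 (eraseCoord i w) * |w i| /
    (‖w‖ * ‖eraseCoord i w‖ * (‖w‖ + ‖eraseCoord i w‖))

lemma eraseSlope_of_eq_zero {w : EuclideanSpace ℝ (Fin n)} (h : w i = 0) :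
    eraseSlope i w = 1 / ‖w‖ := by
  simp [eraseSlope, h]

lemma continuousAt_eraseSlope {w : EuclideanSpace ℝ (Fin n)} (hw : w ≠ 0) (h : w i = 0) :
    ContinuousAt (eraseSlope i) w := by
  have hw' : ‖w‖ ≠ 0 := norm_ne_zero_iff.2 hw
  have hu : ‖eraseCoord i w‖ ≠ 0 := by rwa [eraseCoord_of_eq_zero i h]
  have := continuous_eraseCoord i
  unfold eraseSlope
  fun_prop (disch := positivity)

lemma ratio_sub_ratio_eraseCoord {w : EuclideanSpace ℝ (Fin n)} (hw : w ≠ 0)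
    (hu : eraseCoord i w ≠ 0) :
    ratio w - ratio (eraseCoord i w) = |w i| * eraseSlope i w := by
  have hl1 : l1 w = l1 (eraseCoord i w) + |w i| := by rw [l1_eraseCoord]; ring
  have hnorm : ‖w‖ ^ 2 = ‖eraseCoord i w‖ ^ 2 + |w i| ^ 2 := by
    rw [norm_eraseCoord_sq, sq_abs]; ring
  have hr : 0 < ‖w‖ := norm_pos_iff.2 hw
  have hs : 0 < ‖eraseCoord i w‖ := norm_pos_iff.2 hu
  rw [ratio, ratio, if_neg hw, if_neg hu, eraseSlope, hl1]
  field_simp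
  linear_combination -l1 (eraseCoord i w) * hnorm

lemma eraseSlope_le_of_isMin {β γ : ℝ} (hγ : 0 < γ) (hβ : 0 ≤ β)
    {v w : EuclideanSpace ℝ (Fin n)}
    (hmin : ∀ u, ratio w + β / (2 * γ) * ‖w - v‖ ^ 2 ≤ ratio u + β / (2 * γ) * ‖u - v‖ ^ 2)
    (hwi : w i ≠ 0) (hu : eraseCoord i w ≠ 0) :
    eraseSlope i w ≤ β / γ * |v i| := by
  have hw : w ≠ 0 := fun h ↦ hwi (by simp [h])
  have hT : 0 < |w i| := abs_pos.2 hwi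
  have hC : 0 ≤ β / (2 * γ) := by positivity
  have h := hmin (eraseCoord i w)
  rw [norm_eraseCoord_sub_sq] at h
  have hdiff := ratio_sub_ratio_eraseCoord i hw hu
  have hwv : w i * v i ≤ |w i| * |v i| := (le_abs_self _).trans (abs_mul _ _).le
  refine le_of_mul_le_mul_left ?_ hT
  calc |w i| * eraseSlope i w ≤ β / (2 * γ) * (2 * (w i * v i) - w i ^ 2) := by linarith
    _ ≤ β / (2 * γ) * (2 * (|w i| * |v i|)) := by gcongr; nlinarith [sq_nonneg (w i)]
    _ = |w i| * (β / γ * |v i|) := by field_simp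

end EraseSlope

theorem eventually_coord_eq_zero_of_isMin_prox {n : ℕ} {β γ : ℝ} (hγ : 0 < γ) (hβ : 0 ≤ β)
    {w v : ℕ → EuclideanSpace ℝ (Fin n)} {w' v' : EuclideanSpace ℝ (Fin n)}
    (hmin : ∀ k u, ratio (w k) + β / (2 * γ) * ‖w k - v k‖ ^ 2 ≤
      ratio u + β / (2 * γ) * ‖u - v k‖ ^ 2)
    (hw : Tendsto w atTop (𝓝 w')) (hw' : w' ≠ 0) (hv : Tendsto v atTop (𝓝 v'))
    {i : Fin n} (hi : w' i = 0) (hvi : β / γ * |v' i| < 1 / ‖w'‖) :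
    ∀ᶠ k in atTop, w k i = 0 := by
  have hslope : Tendsto (fun k ↦ eraseSlope i (w k)) atTop (𝓝 (1 / ‖w'‖)) := by
    rw [← eraseSlope_of_eq_zero i hi]
    exact (continuousAt_eraseSlope i hw' hi).tendsto.comp hw
  have hvi' : Tendsto (fun k ↦ β / γ * |v k i|) atTop (𝓝 (β / γ * |v' i|)) :=
    (((EuclideanSpace.proj i).continuous.tendsto v').comp hv).abs.const_mul _
  have hu : ∀ᶠ k in atTop, eraseCoord i (w k) ≠ 0 := by
    refine Tendsto.eventually_ne ?_ hw'
    rw [← eraseCoord_of_eq_zero i hi]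
    exact ((continuous_eraseCoord i).tendsto w').comp hw
  filter_upwards [hvi'.eventually_lt hslope hvi, hu] with k hlt hk
  by_contra hwi
  exact (eraseSlope_le_of_isMin i hγ hβ (hmin k) hwi hk).not_gt hlt

lemma multiplier_eq_grad_of_admm {m n : ℕ} {A : Matrix (Fin m) (Fin n) ℝ}
    {b : EuclideanSpace ℝ (Fin m)} {β γ : ℝ} (hβ : β ≠ 0) {X : Set (EuclideanSpace ℝ (Fin n))}
    {x y z : ℕ → EuclideanSpace ℝ (Fin n)}
    (hADMM : ADMMpSeq β γ X (fun x ↦ 1 / 2 * ‖mv A x - b‖ ^ 2) x y z) (k : ℕ) :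
    z (k + 1) = mv A.transpose (mv A (y (k + 1)) - b) := by
  obtain ⟨-, hymin, hupd⟩ := hADMM k
  have hstat := mv_transpose_add_smul_eq_zero_of_isMin A b β (x (k + 1) + β⁻¹ • z k) (y (k + 1))
    fun u ↦ by simpa only [sub_sub] using hymin u
  rw [hupd, eq_neg_of_add_eq_zero_left hstat, smul_sub, smul_sub, smul_add, smul_inv_smul₀ hβ]
  abel

lemma nonneg_of_forall_norm_sub_le_mul {E F : Type*} [NormedAddCommGroup E] [Nontrivial E]
    [NormedAddCommGroup F] {G : E → F} {L : ℝ} (hG : ∀ a c, ‖G a - G c‖ ≤ L * ‖a - c‖) :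
    0 ≤ L := by
  obtain ⟨a, ha⟩ := exists_ne (0 : E)
  have h := (norm_nonneg _).trans (hG a 0)
  rw [sub_zero] at h
  exact nonneg_of_mul_nonneg_left h (norm_pos_iff.2 ha)

theorem stmt16_general {m n : ℕ} (A : Matrix (Fin m) (Fin n) ℝ) (b : EuclideanSpace ℝ (Fin m))
    (Φ : EuclideanSpace ℝ (Fin n) → ℝ)
    (hΦ : Φ = fun x => 1 / 2 * ‖mv A x - b‖ ^ 2)
    (L : ℝ)
    (hL : ∀ x y : EuclideanSpace ℝ (Fin n),
      ‖mv A.transpose (mv A x - b) - mv A.transpose (mv A y - b)‖ ≤ L * ‖x - y‖)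
    (γ β : ℝ) (hγ : 0 < γ) (hβ : 2 * L < β)
    (x y z : ℕ → EuclideanSpace ℝ (Fin n))
    (hADMM : ADMMpSeq β γ Set.univ Φ x y z)
    (xinf : EuclideanSpace ℝ (Fin n))
    (hconv : Filter.Tendsto x Filter.atTop (nhds xinf)) (hxinf : xinf ≠ 0)
    (qinf : EuclideanSpace ℝ (Fin n)) (hq : qinf = mv A.transpose (mv A xinf - b))
    (hnd2 : ∀ i, xinf i = 0 → |qinf i| < γ / ‖xinf‖) :
    ∃ K : ℕ, ∀ k ≥ K, ∀ i, x k i ≠ 0 ↔ xinf i ≠ 0 := by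
  subst hΦ
  have : Nontrivial (EuclideanSpace ℝ (Fin n)) := nontrivial_of_ne xinf 0 hxinf
  have hL0 : 0 ≤ L := nonneg_of_forall_norm_sub_le_mul hL
  have hβ0 : 0 < β := by linarith
  obtain ⟨hy, hzq⟩ := tendsto_of_lipschitz_multiplier_update hL0 hL hβ
    (multiplier_eq_grad_of_admm hβ0.ne' hADMM) (fun k ↦ (hADMM k).2.2) hconv
  have hv : Tendsto (fun k ↦ y k - β⁻¹ • z k) atTop (𝓝 (xinf - β⁻¹ • qinf)) :=
    hq ▸ hy.sub (hzq.const_smul β⁻¹)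
  have hzero : ∀ i, xinf i = 0 → ∀ᶠ k in atTop, x k i = 0 := fun i hi ↦ by
    rw [← map_add_atTop_eq_nat 1]
    refine eventually_coord_eq_zero_of_isMin_prox hγ hβ0.le (fun k u ↦ (hADMM k).1.2 u trivial)
      (hconv.comp (tendsto_add_atTop_nat 1)) hxinf hv hi ?_
    have : β / γ * |(xinf - β⁻¹ • qinf) i| = |qinf i| / γ := by
      rw [PiLp.sub_apply, PiLp.smul_apply, hi, zero_sub, abs_neg, smul_eq_mul, abs_mul,
        abs_inv, abs_of_pos hβ0]
      field_simp
    rw [this, div_lt_iff₀ hγ, one_div_mul_eq_div]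
    exact hnd2 i hi
  have hnonzero : ∀ i, xinf i ≠ 0 → ∀ᶠ k in atTop, x k i ≠ 0 := fun i hi ↦
    (((EuclideanSpace.proj i).continuous.tendsto xinf).comp hconv).eventually_ne hi
  refine eventually_atTop.1 (eventually_all.2 fun i ↦ ?_)
  by_cases hi : xinf i = 0
  · filter_upwards [hzero i hi] with k hk using by simp [hk, hi]
  · filter_upwards [hnonzero i hi] with k hk using by simp [hk, hi]

theorem stmt16 {m n : ℕ} (A : Matrix (Fin m) (Fin n) ℝ) (b : EuclideanSpace ℝ (Fin m))
    (Φ : EuclideanSpace ℝ (Fin n) → ℝ)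
    (hΦ : Φ = fun x => 1 / 2 * ‖mv A x - b‖ ^ 2)
    (L : ℝ)
    (hL : ∀ x y : EuclideanSpace ℝ (Fin n),
      ‖mv A.transpose (mv A x - b) - mv A.transpose (mv A y - b)‖ ≤ L * ‖x - y‖)
    (γ β : ℝ) (hγ : 0 < γ) (hβ : 2 * L < β)
    (hAb : mv A.transpose b ≠ 0)
    (x y z : ℕ → EuclideanSpace ℝ (Fin n))
    (hADMM : ADMMpSeq β γ Set.univ Φ x y z)
    (hbdd : ∃ C : ℝ, ∀ k, ‖x k‖ ≤ C)
    (xinf : EuclideanSpace ℝ (Fin n))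
    (hconv : Filter.Tendsto x Filter.atTop (nhds xinf)) (hxinf : xinf ≠ 0)
    (qinf : EuclideanSpace ℝ (Fin n)) (hq : qinf = mv A.transpose (mv A xinf - b))
    (hnd1 : ∀ i, xinf i ≠ 0 →
      γ * ((if 0 < xinf i then 1 else -1) / ‖xinf‖ - l1 xinf / ‖xinf‖ ^ 3 * xinf i)
        + qinf i = 0)
    (hnd2 : ∀ i, xinf i = 0 → |qinf i| < γ / ‖xinf‖) :
    ∃ K : ℕ, ∀ k ≥ K, ∀ i, x k i ≠ 0 ↔ xinf i ≠ 0 :=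
  stmt16_general A b Φ hΦ L hL γ β hγ hβ x y z hADMM xinf hconv hxinf qinf hq hnd2
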